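/- arXiv:math/0205210 — 2 statements merged into one kernel-verified Lean document; each statement's English description precedes it below -/
import Mathlib

section
/- Let C be an abelian category of finite length. Assume that Ext^2(B, B') = 0 for all semisimple objects B, B' of C. Then Ext^2(A, B) = 0 for all objects A, B of C; that is, C has cohomological dimension ≤ 1. -/
/-!
STATEMENT 1 (Lemma 9.2 of the paper):
Let `C` be an abelian category of finite length (the subobject lattice of every object
satisfies the ascending and descending chain conditions). Assume `Ext²(B, B') = 0` for
all semisimple objects `B`, `B'` (finite direct sums of simple objects). Then
`Ext²(A, B) = 0` for all objects `A`, `B`; i.e. `C` has cohomological dimension ≤ 1.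
-/

open CategoryTheory CategoryTheory.Abelian CategoryTheory.Limits

attribute [local instance] CategoryTheory.Abelian.hasFiniteBiproducts

universe w v u

/-- An object of an abelian category is semisimple if it is isomorphic to a finite
direct sum (biproduct) of simple objects. -/
def IsSemisimpleObject {C : Type u} [Category.{v} C] [Abelian C] (X : C) : Prop :=
  ∃ (n : ℕ) (f : Fin n → C), (∀ i, Simple (f i)) ∧ Nonempty (X ≅ ⨁ f)

/-!
Ext vanishing is inherited along short exact sequences by the long exact Ext sequences, so for
fixed `A` the objects `B` with `Ext²(A, B) = 0` are closed under extensions, and likewise in the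
first variable. In a category of finite length, every object is reached from simple objects by
extensions: peel off a simple subobject and recurse on the quotient, which terminates because
the kernels of the successive quotient maps strictly increase. Applying this first in `B` for
simple `A`, then in `A`, reduces `Ext²(A, B) = 0` to the case of simple `A` and `B`.
-/

namespace CategoryTheory

variable {C : Type u} [Category.{v} C] [Abelian C]

lemma isSemisimpleObject_of_simple (S : C) [Simple S] : IsSemisimpleObject S :=
  ⟨1, fun _ => S, fun _ => inferInstance, ⟨(biproductUniqueIso fun _ : Fin 1 => S).symm⟩⟩

lemma ObjectProperty.prop_of_isZero_of_isClosedUnderExtensions (P : ObjectProperty C)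
    [P.ContainsZero] [P.IsClosedUnderExtensions] {Y : C} (hY : IsZero Y) : P Y := by
  obtain ⟨Z, hZ, hPZ⟩ := P.exists_prop_of_containsZero
  exact P.prop_X₂_of_shortExact (S := ShortComplex.mk (0 : Z ⟶ Y) (0 : Y ⟶ Z) zero_comp)
    { exact := ShortComplex.exact_of_isZero_X₂ _ hY
      mono_f := hZ.mono _
      epi_g := hZ.epi _ } hPZ hPZ

lemma kernelSubobject_lt_kernelSubobject_comp_cokernel_π {X Y : C} (g : X ⟶ Y) [Epi g]
    (T : Subobject Y) (hT : ¬IsZero (T : C)) :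
    kernelSubobject g < kernelSubobject (g ≫ cokernel.π T.arrow) := by
  refine lt_of_le_of_ne (kernelSubobject_comp_le g _) fun h => hT ?_
  -- The pullback of `T` along `g` maps onto `T`, and into the kernel of `g` by `h`.
  have hsnd : pullback.snd T.arrow g ≫ g = 0 := by
    refine (kernelSubobject_factors_iff _ _).1 (h ▸ kernelSubobject_factors _ _ ?_)
    rw [← Category.assoc, ← pullback.condition, Category.assoc, cokernel.condition, comp_zero]
  refine IsZero.of_mono_eq_zero T.arrow ?_
  rw [← cancel_epi (pullback.fst T.arrow g), pullback.condition, hsnd, comp_zero]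

theorem ObjectProperty.prop_of_forall_simple (P : ObjectProperty C) [P.ContainsZero]
    [P.IsClosedUnderExtensions] [∀ Y : C, IsArtinianObject Y] (hP : ∀ S : C, Simple S → P S)
    (X : C) [IsNoetherianObject X] : P X := by
  suffices ∀ (K : Subobject X) (Y : C) (g : X ⟶ Y) [Epi g], kernelSubobject g = K → P Y from
    this _ X (𝟙 X) rfl
  intro K
  induction K using WellFoundedGT.induction with
  | _ K ih =>
  intro Y g _ hK
  by_cases hY : IsZero Y
  · exact P.prop_of_isZero_of_isClosedUnderExtensions hY
  obtain ⟨T, hT⟩ := exists_simple_subobject hY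
  have hlt := hK ▸ kernelSubobject_lt_kernelSubobject_comp_cokernel_π g T (Simple.not_isZero _)
  exact P.prop_X₂_of_shortExact { exact := ShortComplex.exact_cokernel T.arrow } (hP _ hT)
    (ih _ hlt _ (g ≫ cokernel.π T.arrow) rfl)

namespace Abelian.Ext

open ZeroObject

variable [HasExt.{w} C]

def vanishesFrom (X : C) (n : ℕ) : ObjectProperty C := fun Y => Subsingleton (Ext X Y n)

def vanishesInto (Y : C) (n : ℕ) : ObjectProperty C := fun X => Subsingleton (Ext X Y n)

instance (X : C) (n : ℕ) : (vanishesFrom X n).ContainsZero where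
  exists_zero := ⟨0, isZero_zero C, subsingleton_of_forall_eq 0 fun x => by
    rw [← x.comp_mk₀_id, (isZero_zero C).eq_of_src (𝟙 _) 0, mk₀_zero, comp_zero]⟩

instance (Y : C) (n : ℕ) : (vanishesInto Y n).ContainsZero where
  exists_zero := ⟨0, isZero_zero C, subsingleton_of_forall_eq 0 fun x => by
    rw [← x.mk₀_id_comp, (isZero_zero C).eq_of_src (𝟙 _) 0, mk₀_zero, zero_comp]⟩

instance (X : C) (n : ℕ) : (vanishesFrom X n).IsClosedUnderExtensions where
  prop_X₂_of_shortExact {S} hS h₁ h₃ := subsingleton_of_forall_eq 0 fun x => by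
    obtain ⟨x₁, rfl⟩ := covariant_sequence_exact₂ X hS x (Subsingleton.elim (h := h₃) _ 0)
    rw [Subsingleton.elim (h := h₁) x₁ 0, zero_comp]

instance (Y : C) (n : ℕ) : (vanishesInto Y n).IsClosedUnderExtensions where
  prop_X₂_of_shortExact {S} hS h₁ h₃ := subsingleton_of_forall_eq 0 fun x => by
    obtain ⟨x₃, rfl⟩ :=
      contravariant_sequence_exact₂ hS Y x (Subsingleton.elim (h := h₁) _ 0)
    rw [Subsingleton.elim (h := h₃) x₃ 0, comp_zero]

end Abelian.Ext

end CategoryTheory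

theorem stmt1 {C : Type u} [Category.{v} C] [Abelian C] [HasExt.{w} C]
    (hlen : ∀ X : C, WellFoundedGT (Subobject X) ∧ WellFoundedLT (Subobject X))
    (hss : ∀ B B' : C, IsSemisimpleObject B → IsSemisimpleObject B' →
      Subsingleton (Ext B B' 2)) :
    ∀ A B : C, Subsingleton (Ext A B 2) := by
  have : ∀ X : C, IsArtinianObject X := fun X => ⟨(hlen X).2⟩
  have : ∀ X : C, IsNoetherianObject X := fun X => ⟨(hlen X).1⟩
  have hsimple (S : C) [Simple S] (B : C) : Subsingleton (Ext S B 2) :=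
    (Ext.vanishesFrom S 2).prop_of_forall_simple (fun T _ =>
      hss _ _ (isSemisimpleObject_of_simple S) (isSemisimpleObject_of_simple T)) B
  intro A B
  exact (Ext.vanishesInto B 2).prop_of_forall_simple (fun S _ => hsimple S B) A
end

section
/- Let γ : C → C' be an additive exact fully faithful functor between abelian categories such that for all objects B₀, B₁ of C the induced map Ext^1(B₁, B₀) → Ext^1(γ(B₁), γ(B₀)) is surjective. Then the essential image of γ is closed under extensions: for every short exact sequence 0 → X₀ → X → X₁ → 0 in C' with X₀ ≅ γ(B₀) and X₁ ≅ γ(B₁) for some objects B₀, B₁ of C, the middle object X is isomorphic to γ(B) for some object B of C. -/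
/-!
STATEMENT 7 (the essential-surjectivity step in the proof of Proposition 9.4):
Let `γ : C ⥤ C'` be an additive exact fully faithful functor between abelian
categories such that for all objects `B₀`, `B₁` of `C` the induced map
`Ext¹(B₁, B₀) → Ext¹(γ B₁, γ B₀)` is surjective.  Then the essential image of `γ` is
closed under extensions: for every short exact sequence `0 → X₀ → X → X₁ → 0` in `C'`
with `X₀ ≅ γ B₀` and `X₁ ≅ γ B₁` for some objects `B₀`, `B₁` of `C`, the middle
object `X` is isomorphic to `γ B` for some object `B` of `C`.

Since this version of Mathlib has no functor-induced map on `Abelian.Ext`, the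
induced map on `Ext¹` is expressed via Yoneda extensions: elements of `Ext¹(A, B)`
are short exact sequences `0 → B → E → A → 0` up to equivalence, and an exact functor
maps extensions to extensions; surjectivity of the induced map is surjectivity on
equivalence classes.
-/

open CategoryTheory CategoryTheory.Abelian CategoryTheory.Limits

universe w₁ w₂ v₁ v₂ u₁ u₂

/-- A Yoneda extension of `A` by `B`: a short exact sequence `0 → B → E → A → 0`.
Equivalence classes of these form the Yoneda `Ext¹(A, B)`. -/
structure YExt {C : Type u₁} [Category.{v₁} C] [Abelian C] (A B : C) where
  E : C
  ι : B ⟶ E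
  π : E ⟶ A
  zero : ι ≫ π = 0
  shortExact : (ShortComplex.mk ι π zero).ShortExact

/-- Two extensions of `A` by `B` represent the same class in `Ext¹(A, B)` iff they are
linked by an isomorphism commuting with the structure maps. -/
def YExtEquiv {C : Type u₁} [Category.{v₁} C] [Abelian C] {A B : C}
    (S T : YExt A B) : Prop :=
  ∃ φ : S.E ≅ T.E, S.ι ≫ φ.hom = T.ι ∧ φ.hom ≫ T.π = S.π

/-- The image of an extension under an exact functor. -/
def YExt.map {C : Type u₁} [Category.{v₁} C] [Abelian C]
    {C' : Type u₂} [Category.{v₂} C'] [Abelian C']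
    (γ : C ⥤ C') [γ.Additive] [PreservesFiniteLimits γ] [PreservesFiniteColimits γ]
    {A B : C} (S : YExt A B) : YExt (γ.obj A) (γ.obj B) where
  E := γ.obj S.E
  ι := γ.map S.ι
  π := γ.map S.π
  zero := by rw [← γ.map_comp, S.zero, γ.map_zero]
  shortExact := S.shortExact.map_of_exact γ

/-- The map `Ext¹(A, B) → Ext¹(γ A, γ B)` induced by an exact functor `γ` is
surjective. -/
def YExtMapSurjective {C : Type u₁} [Category.{v₁} C] [Abelian C]
    {C' : Type u₂} [Category.{v₂} C'] [Abelian C']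
    (γ : C ⥤ C') [γ.Additive] [PreservesFiniteLimits γ] [PreservesFiniteColimits γ]
    (A B : C) : Prop :=
  ∀ T : YExt (γ.obj A) (γ.obj B), ∃ S : YExt A B, YExtEquiv (S.map γ) T

/-- The map `Ext¹(A, B) → Ext¹(γ A, γ B)` induced by an exact functor `γ` is
injective. -/
def YExtMapInjective {C : Type u₁} [Category.{v₁} C] [Abelian C]
    {C' : Type u₂} [Category.{v₂} C'] [Abelian C']
    (γ : C ⥤ C') [γ.Additive] [PreservesFiniteLimits γ] [PreservesFiniteColimits γ]
    (A B : C) : Prop :=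
  ∀ S T : YExt A B, YExtEquiv (S.map γ) (T.map γ) → YExtEquiv S T

section

variable {C : Type u₁} [Category.{v₁} C] [Abelian C]

def YExt.ofShortExact {S : ShortComplex C} (hS : S.ShortExact) {A B : C}
    (e₁ : S.X₁ ≅ B) (e₃ : S.X₃ ≅ A) : YExt A B where
  E := S.X₂
  ι := e₁.inv ≫ S.f
  π := S.g ≫ e₃.hom
  zero := by simp
  shortExact :=
    ShortComplex.shortExact_of_iso (ShortComplex.isoMk e₁ (Iso.refl _) e₃ (by simp) (by simp)) hS

theorem YExtMapSurjective.exists_iso_obj {C' : Type u₂} [Category.{v₂} C'] [Abelian C']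
    {γ : C ⥤ C'} [γ.Additive] [PreservesFiniteLimits γ] [PreservesFiniteColimits γ]
    {A B : C} (h : YExtMapSurjective γ A B) (T : YExt (γ.obj A) (γ.obj B)) :
    ∃ S : YExt A B, Nonempty (T.E ≅ γ.obj S.E) := by
  obtain ⟨S, φ, -, -⟩ := h T
  exact ⟨S, ⟨φ.symm⟩⟩

end

theorem stmt7_general {C : Type u₁} [Category.{v₁} C] [Abelian C]
    {C' : Type u₂} [Category.{v₂} C'] [Abelian C']
    -- `γ` is an additive exact fully faithful functor:
    (γ : C ⥤ C') [γ.Additive]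
    [PreservesFiniteLimits γ] [PreservesFiniteColimits γ]
    -- the induced map `Ext¹(B₁, B₀) → Ext¹(γ B₁, γ B₀)` is surjective:
    (hsurj : ∀ B₀ B₁ : C, YExtMapSurjective γ B₁ B₀)
    -- a short exact sequence `0 → X₀ → X → X₁ → 0` in `C'`:
    {X₀ X X₁ : C'} (f : X₀ ⟶ X) (g : X ⟶ X₁) (hzero : f ≫ g = 0)
    (hse : (ShortComplex.mk f g hzero).ShortExact)
    -- whose end terms lie in the essential image of `γ`:
    (B₀ B₁ : C) (e₀ : X₀ ≅ γ.obj B₀) (e₁ : X₁ ≅ γ.obj B₁) :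
    -- then the middle term lies in the essential image of `γ`:
    ∃ B : C, Nonempty (X ≅ γ.obj B) := by
  obtain ⟨S, hS⟩ := (hsurj B₀ B₁).exists_iso_obj (YExt.ofShortExact hse e₀ e₁)
  exact ⟨S.E, hS⟩

theorem stmt7 {C : Type u₁} [Category.{v₁} C] [Abelian C]
    {C' : Type u₂} [Category.{v₂} C'] [Abelian C']
    -- `γ` is an additive exact fully faithful functor:
    (γ : C ⥤ C') [γ.Additive] [γ.Full] [γ.Faithful]
    [PreservesFiniteLimits γ] [PreservesFiniteColimits γ]
    -- the induced map `Ext¹(B₁, B₀) → Ext¹(γ B₁, γ B₀)` is surjective: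
    (hsurj : ∀ B₀ B₁ : C, YExtMapSurjective γ B₁ B₀)
    -- a short exact sequence `0 → X₀ → X → X₁ → 0` in `C'`:
    {X₀ X X₁ : C'} (f : X₀ ⟶ X) (g : X ⟶ X₁) (hzero : f ≫ g = 0)
    (hse : (ShortComplex.mk f g hzero).ShortExact)
    -- whose end terms lie in the essential image of `γ`:
    (B₀ B₁ : C) (e₀ : X₀ ≅ γ.obj B₀) (e₁ : X₁ ≅ γ.obj B₁) :
    -- then the middle term lies in the essential image of `γ`:
    ∃ B : C, Nonempty (X ≅ γ.obj B) :=
  stmt7_general γ hsurj f g hzero hse B₀ B₁ e₀ e₁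
end
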